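/- Let ρ ≥ 1, s ≥ 0, s0 ∈ ℝ with s + ρ ≥ 1 and s0 < s + ρ - 5/2. Then the sum J = ∑_{n, n3 ∈ ℤ} ⟨n⟩^{2s0 + 2} * ⟨n - n3⟩^{-(2ρ - 2 + 2s)} * ⟨n3⟩^{-(2ρ + 2s)} is finite. -/
import Mathlib


noncomputable def jap (m : ℤ) : ℝ := Real.sqrt (1 + (m : ℝ) ^ 2)

lemma jap_pos (m : ℤ) : 0 < jap m := Real.sqrt_pos.mpr (by positivity)

lemma one_le_jap (m : ℤ) : 1 ≤ jap m := by
  rw [show (1:ℝ) = Real.sqrt 1 by simp [Real.sqrt_one]]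
  exact Real.sqrt_le_sqrt (by nlinarith [sq_nonneg ((m:ℝ))])

lemma abs_le_jap (m : ℤ) : |(m : ℝ)| ≤ jap m := by
  rw [show |(m:ℝ)| = Real.sqrt ((m:ℝ)^2) by rw [Real.sqrt_sq_eq_abs]]
  exact Real.sqrt_le_sqrt (by nlinarith)

lemma jap_sub_mul (n m : ℤ) : jap n ≤ Real.sqrt 2 * jap (n - m) * jap m := by
  have h : Real.sqrt (2 * ((1 + ((n:ℝ) - m)^2) * (1 + (m:ℝ)^2)))
      = Real.sqrt 2 * jap (n - m) * jap m := by
    rw [Real.sqrt_mul (by norm_num : (0:ℝ) ≤ 2), Real.sqrt_mul (by positivity), jap, jap]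
    push_cast
    ring
  rw [← h, jap]
  apply Real.sqrt_le_sqrt
  push_cast
  nlinarith [sq_nonneg ((n:ℝ) - m - m), sq_nonneg (((n:ℝ) - m) * m - 1),
    sq_nonneg ((n:ℝ)-m), sq_nonneg (m:ℝ)]

lemma summable_jap (e : ℝ) (he : e < -1) : Summable (fun n : ℤ => jap n ^ e) := by
  have hb : (1:ℝ) < -e := by linarith
  have h1 : Summable fun n : ℤ => |(n : ℝ)| ^ (- -e) := Real.summable_abs_int_rpow hb
  have h2 : Summable fun n : ℤ => |(n : ℝ)| ^ e + (if n = 0 then (1:ℝ) else 0) := by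
    refine Summable.add ?_ ((hasSum_ite_eq (0:ℤ) (1:ℝ)).summable)
    simpa using h1
  refine h2.of_nonneg_of_le (fun n => Real.rpow_nonneg (jap_pos n).le _) (fun n => ?_)
  rcases eq_or_ne n 0 with rfl | hn
  · simp [jap, Real.zero_rpow (by linarith : e ≠ 0), Real.one_rpow]
  · have h0 : (0:ℝ) < |(n:ℝ)| := by
      simp only [abs_pos, ne_eq, Int.cast_eq_zero]; exact hn
    have := Real.rpow_le_rpow_of_nonpos h0 (abs_le_jap n) (by linarith : e ≤ 0)
    simp only [if_neg hn, add_zero]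
    exact this

/-- Finiteness of the double sum `J^dNLS` in the quintic normal form estimate for the
modulated derivative NLS. -/
theorem dnls_quintic_sum_finite (ρ s s0 : ℝ) (hρ : 1 ≤ ρ) (hs : 0 ≤ s)
    (h1 : 1 ≤ s + ρ) (h2 : s0 < s + ρ - 5 / 2) :
    Summable (fun p : ℤ × ℤ =>
      jap p.1 ^ (2 * s0 + 2) * jap (p.1 - p.2) ^ (-(2 * ρ - 2 + 2 * s)) *
        jap p.2 ^ (-(2 * ρ + 2 * s))) := by
  obtain ⟨A, hA⟩ : ∃ x : ℝ, x = 2 * s0 + 2 := ⟨_, rfl⟩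
  obtain ⟨a, ha⟩ : ∃ x : ℝ, x = 2 * ρ - 2 + 2 * s := ⟨_, rfl⟩
  obtain ⟨b, hb⟩ : ∃ x : ℝ, x = 2 * ρ + 2 * s := ⟨_, rfl⟩
  simp only [← hA, ← ha, ← hb]
  have ha0 : 0 ≤ a := by rw [ha]; linarith
  have hAa : A - a < -1 := by rw [hA, ha]; linarith
  have hS0 : (0:ℝ) < Real.sqrt 2 := by positivity
  have hf : Summable (fun n : ℤ => jap n ^ (A - a)) := summable_jap _ hAa
  have hg : Summable (fun n : ℤ => jap n ^ (-2 : ℝ)) := summable_jap _ (by norm_num)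
  have hmaj : Summable (fun p : ℤ × ℤ =>
      Real.sqrt 2 ^ a * (jap p.1 ^ (A - a) * jap p.2 ^ (-2 : ℝ))) :=
    (hf.mul_of_nonneg hg (fun n => Real.rpow_nonneg (jap_pos n).le _)
      (fun n => Real.rpow_nonneg (jap_pos n).le _)).mul_left _
  refine hmaj.of_nonneg_of_le (fun p => by
    have := (jap_pos p.1).le; have := (jap_pos (p.1 - p.2)).le; have := (jap_pos p.2).le
    positivity) (fun p => ?_)
  obtain ⟨n, m⟩ := p
  set X := jap n with hX
  set Y := jap (n - m) with hY
  set Z := jap m with hZ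
  show X ^ A * Y ^ (-a) * Z ^ (-b) ≤ _
  have hX0 : 0 < X := jap_pos n
  have hY0 : 0 < Y := jap_pos (n - m)
  have hZ0 : 0 < Z := jap_pos m
  have hXYZ : X ≤ Real.sqrt 2 * Y * Z := jap_sub_mul n m
  have hpow : X ^ a ≤ Real.sqrt 2 ^ a * Y ^ a * Z ^ a := by
    calc X ^ a ≤ (Real.sqrt 2 * Y * Z) ^ a := Real.rpow_le_rpow hX0.le hXYZ ha0
      _ = Real.sqrt 2 ^ a * Y ^ a * Z ^ a := by
          rw [Real.mul_rpow (by positivity) hZ0.le, Real.mul_rpow hS0.le hY0.le]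
  have key : Y ^ (-a) ≤ Real.sqrt 2 ^ a * Z ^ a * X ^ (-a) := by
    rw [Real.rpow_neg hX0.le, Real.rpow_neg hY0.le, ← div_eq_mul_inv,
      inv_eq_one_div, div_le_div_iff₀ (by positivity) (by positivity), one_mul]
    calc X ^ a ≤ Real.sqrt 2 ^ a * Y ^ a * Z ^ a := hpow
      _ = Real.sqrt 2 ^ a * Z ^ a * Y ^ a := by ring
  calc X ^ A * Y ^ (-a) * Z ^ (-b)
      ≤ X ^ A * (Real.sqrt 2 ^ a * Z ^ a * X ^ (-a)) * Z ^ (-b) :=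
        mul_le_mul_of_nonneg_right
          (mul_le_mul_of_nonneg_left key (Real.rpow_nonneg hX0.le _))
          (Real.rpow_nonneg hZ0.le _)
    _ = Real.sqrt 2 ^ a * (X ^ (A - a) * Z ^ (-2 : ℝ)) := by
        rw [show A - a = A + -a by ring, show (-2:ℝ) = a + -b by rw [ha, hb]; ring,
          Real.rpow_add hX0, Real.rpow_add hZ0]
        ring
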